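/- Algebraic embedding of the deterministic switched system (derivation of the lifted dynamics): let f : Fin M × Fin N → Fin N with structure matrix L (the logical matrix with L(δ_M^γ ⊗ δ_N^θ) = δ_N^{f(γ,θ)}), let A_j ∈ ℝ^{n×n} and B_j ∈ ℝ^{n×m} for j ∈ Fin N, let Ã = [A_1 ⋯ A_N] ∈ ℝ^{n×Nn} and B̃ = [B_1 ⋯ B_N] ∈ ℝ^{n×Nm} be the horizontal concatenations, and let Φ_N be the N-th power-reducing matrix (the N²×N logical matrix with columns δ_N^j ⊗ δ_N^j). Define 𝐀 := (L ⊗ I_n)(I_{MN} ⊗ Ã)((I_M ⊗ Φ_N) ⊗ I_n) ∈ ℝ^{Nn×MNn} and 𝐁 := (L ⊗ I_n)(I_{MN} ⊗ B̃)((I_M ⊗ Φ_N) ⊗ I_m) ∈ ℝ^{Nn×MNm}. Then for all γ ∈ Fin M, θ ∈ Fin N, x ∈ ℝⁿ, u ∈ ℝ^m: δ_N^{f(γ,θ)} ⊗ (A_θ x + B_θ u) = 𝐀 · (δ_M^γ ⊗ δ_N^θ ⊗ x) + 𝐁 · (δ_M^γ ⊗ δ_N^θ ⊗ u). -/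

import Mathlib

/-!
Each factor of `𝐀` acts on `δ_M^γ ⊗ δ_N^θ ⊗ x` through the mixed-product rule
`(P ⊗ Q)(v ⊗ w) = P v ⊗ Q w`: `I_M ⊗ Φ_N` duplicates the mode `δ_N^θ`, `I_{MN} ⊗ Ã` uses the
copy to select the block `A_θ`, and `L ⊗ I_n` sends `δ_M^γ ⊗ δ_N^θ` to `δ_N^{f(γ,θ)}`; in
between, only the bracketing of the Kronecker factors changes. The same computation applies to
`𝐁`, and adding the two gives the claim.
-/

open Matrix

noncomputable section

/-- Kronecker product of real matrices with `Fin`-indexed sizes, indices identified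
via the lexicographic equivalence `Fin a × Fin b ≃ Fin (a*b)`. -/
def kron {a b c d : ℕ} (A : Matrix (Fin a) (Fin b) ℝ) (B : Matrix (Fin c) (Fin d) ℝ) :
    Matrix (Fin (a * c)) (Fin (b * d)) ℝ := fun i j =>
  A (finProdFinEquiv.symm i).1 (finProdFinEquiv.symm j).1 *
    B (finProdFinEquiv.symm i).2 (finProdFinEquiv.symm j).2

/-- Recast a matrix along equalities of its `Fin` dimensions. -/
def castM {a b c d : ℕ} (h₁ : a = b) (h₂ : c = d) (A : Matrix (Fin a) (Fin c) ℝ) :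
    Matrix (Fin b) (Fin d) ℝ := fun i j => A (finCongr h₁.symm i) (finCongr h₂.symm j)

/-- The `i`-th standard basis vector of `ℝ^k`, as a `k × 1` column matrix. -/
def eVec (k : ℕ) (i : Fin k) : Matrix (Fin k) (Fin 1) ℝ := fun j _ => if j = i then 1 else 0

/-- A vector of `ℝ^k`, as a `k × 1` column matrix. -/
def colM {k : ℕ} (x : Fin k → ℝ) : Matrix (Fin k) (Fin 1) ℝ := fun j _ => x j

/-- A real matrix is a *logical matrix* if each of its columns is a standard basis vector. -/
def IsLogicalMatrix {a b : ℕ} (L : Matrix (Fin a) (Fin b) ℝ) : Prop :=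
  ∀ j : Fin b, ∃ i : Fin a, ∀ r : Fin a, L r j = if r = i then 1 else 0

/-- The `N`-th power-reducing matrix `Φ_N ∈ ℝ^{N² × N}`, whose `j`-th column is
`δ_N^j ⊗ δ_N^j`. -/
def powerReducing (N : ℕ) : Matrix (Fin (N * N)) (Fin N) ℝ := fun p i =>
  if (finProdFinEquiv.symm p).1 = i ∧ (finProdFinEquiv.symm p).2 = i then 1 else 0

/-- Horizontal concatenation `[M_1 ⋯ M_N]` of a family of `n × c` matrices. -/
def hconcat {N n c : ℕ} (Ms : Fin N → Matrix (Fin n) (Fin c) ℝ) :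
    Matrix (Fin n) (Fin (N * c)) ℝ := fun r p =>
  Ms (finProdFinEquiv.symm p).1 r (finProdFinEquiv.symm p).2

/-- The lifted matrix `𝐀 := (L ⊗ I_n)(I_{MN} ⊗ Ã)((I_M ⊗ Φ_N) ⊗ I_n) ∈ ℝ^{Nn × MNn}`,
with `Ã = [A_1 ⋯ A_N]`. -/
def liftedA (M N n : ℕ) (L : Matrix (Fin N) (Fin (M * N)) ℝ)
    (A : Fin N → Matrix (Fin n) (Fin n) ℝ) : Matrix (Fin (N * n)) (Fin (M * N * n)) ℝ :=
  kron L (1 : Matrix (Fin n) (Fin n) ℝ) *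
    kron (1 : Matrix (Fin (M * N)) (Fin (M * N)) ℝ) (hconcat A) *
    castM (by ring) rfl
      (kron (kron (1 : Matrix (Fin M) (Fin M) ℝ) (powerReducing N))
        (1 : Matrix (Fin n) (Fin n) ℝ))

/-- The lifted matrix `𝐁 := (L ⊗ I_n)(I_{MN} ⊗ B̃)((I_M ⊗ Φ_N) ⊗ I_m) ∈ ℝ^{Nn × MNm}`,
with `B̃ = [B_1 ⋯ B_N]`. -/
def liftedB (M N n m : ℕ) (L : Matrix (Fin N) (Fin (M * N)) ℝ)
    (B : Fin N → Matrix (Fin n) (Fin m) ℝ) : Matrix (Fin (N * n)) (Fin (M * N * m)) ℝ :=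
  kron L (1 : Matrix (Fin n) (Fin n) ℝ) *
    kron (1 : Matrix (Fin (M * N)) (Fin (M * N)) ℝ) (hconcat B) *
    castM (by ring) rfl
      (kron (kron (1 : Matrix (Fin M) (Fin M) ℝ) (powerReducing N))
        (1 : Matrix (Fin m) (Fin m) ℝ))

open scoped Kronecker

section Kron

variable {a b c d e f : ℕ}

theorem kron_eq_reindex_kronecker (A : Matrix (Fin a) (Fin b) ℝ) (B : Matrix (Fin c) (Fin d) ℝ) :
    kron A B = reindex finProdFinEquiv finProdFinEquiv (A ⊗ₖ B) := rfl

theorem kron_apply (A : Matrix (Fin a) (Fin b) ℝ) (B : Matrix (Fin c) (Fin d) ℝ)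
    (i : Fin a) (j : Fin b) (k : Fin c) (l : Fin d) :
    kron A B (finProdFinEquiv (i, k)) (finProdFinEquiv (j, l)) = A i j * B k l := by
  simp [kron]

theorem kron_mul_kron (A : Matrix (Fin a) (Fin b) ℝ) (B : Matrix (Fin c) (Fin d) ℝ)
    (C : Matrix (Fin b) (Fin e) ℝ) (D : Matrix (Fin d) (Fin f) ℝ) :
    kron A B * kron C D = kron (A * C) (B * D) := by
  simp only [kron_eq_reindex_kronecker, reindex_apply, submatrix_mul_equiv, mul_kronecker_mul]

theorem kron_add (A : Matrix (Fin a) (Fin b) ℝ) (B C : Matrix (Fin c) (Fin d) ℝ) :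
    kron A (B + C) = kron A B + kron A C := by
  ext i j
  simp only [kron, Matrix.add_apply, mul_add]

theorem castM_castM (h₁ : a = b) (h₂ : c = d) (h₃ : b = e) (h₄ : d = f)
    (A : Matrix (Fin a) (Fin c) ℝ) :
    castM h₃ h₄ (castM h₁ h₂ A) = castM (h₁.trans h₃) (h₂.trans h₄) A := by
  subst_vars; rfl

theorem castM_mul_castM (h₁ : a = b) (h₂ : c = d) (h₃ : e = f)
    (A : Matrix (Fin a) (Fin c) ℝ) (B : Matrix (Fin c) (Fin e) ℝ) :
    castM h₁ h₂ A * castM h₂ h₃ B = castM h₁ h₃ (A * B) := by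
  subst_vars; rfl

theorem mul_castM (h : c = d) (A : Matrix (Fin a) (Fin b) ℝ) (B : Matrix (Fin b) (Fin c) ℝ) :
    A * castM rfl h B = castM rfl h (A * B) := by
  subst h; rfl

theorem castM_add (h₁ : a = b) (h₂ : c = d) (A B : Matrix (Fin a) (Fin c) ℝ) :
    castM h₁ h₂ (A + B) = castM h₁ h₂ A + castM h₁ h₂ B := rfl

theorem kron_castM_left (h₁ : a = b) (h₂ : c = d) (A : Matrix (Fin a) (Fin c) ℝ)
    (B : Matrix (Fin e) (Fin f) ℝ) :
    kron (castM h₁ h₂ A) B = castM (congrArg (· * e) h₁) (congrArg (· * f) h₂) (kron A B) := by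
  subst_vars; rfl

theorem kron_castM_right (h₁ : a = b) (h₂ : c = d) (A : Matrix (Fin e) (Fin f) ℝ)
    (B : Matrix (Fin a) (Fin c) ℝ) :
    kron A (castM h₁ h₂ B) = castM (congrArg (e * ·) h₁) (congrArg (f * ·) h₂) (kron A B) := by
  subst_vars; rfl

theorem finCongr_finProdFinEquiv_assoc (h : a * (b * c) = a * b * c) (i : Fin a) (j : Fin b)
    (k : Fin c) :
    finCongr h (finProdFinEquiv (i, finProdFinEquiv (j, k))) =
      finProdFinEquiv (finProdFinEquiv (i, j), k) := by
  ext; simp only [finCongr_apply, Fin.val_cast, finProdFinEquiv_apply_val]; ring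

theorem finCongr_finProdFinEquiv_middle (h : a * b * (c * d) = a * (b * c) * d) (i : Fin a)
    (j : Fin b) (k : Fin c) (l : Fin d) :
    finCongr h (finProdFinEquiv (finProdFinEquiv (i, j), finProdFinEquiv (k, l))) =
      finProdFinEquiv (finProdFinEquiv (i, finProdFinEquiv (j, k)), l) := by
  ext; simp only [finCongr_apply, Fin.val_cast, finProdFinEquiv_apply_val]; ring

theorem kron_assoc (A : Matrix (Fin a) (Fin b) ℝ) (B : Matrix (Fin c) (Fin d) ℝ)
    (C : Matrix (Fin e) (Fin f) ℝ) :
    castM (mul_assoc a c e) (mul_assoc b d f) (kron (kron A B) C) = kron A (kron B C) := by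
  ext i j
  obtain ⟨⟨i₁, i₂₃⟩, rfl⟩ := finProdFinEquiv.surjective i
  obtain ⟨⟨i₂, i₃⟩, rfl⟩ := finProdFinEquiv.surjective i₂₃
  obtain ⟨⟨j₁, j₂₃⟩, rfl⟩ := finProdFinEquiv.surjective j
  obtain ⟨⟨j₂, j₃⟩, rfl⟩ := finProdFinEquiv.surjective j₂₃
  simp only [castM, finCongr_finProdFinEquiv_assoc, kron_apply, mul_assoc]

theorem kron_assoc_middle {g h : ℕ} (A : Matrix (Fin a) (Fin b) ℝ)
    (B : Matrix (Fin c) (Fin d) ℝ) (C : Matrix (Fin e) (Fin f) ℝ) (D : Matrix (Fin g) (Fin h) ℝ)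
    (h₁ : a * (c * e) * g = a * c * (e * g)) (h₂ : b * (d * f) * h = b * d * (f * h)) :
    castM h₁ h₂ (kron (kron A (kron B C)) D) = kron (kron A B) (kron C D) := by
  ext i j
  obtain ⟨⟨i₁₂, i₃₄⟩, rfl⟩ := finProdFinEquiv.surjective i
  obtain ⟨⟨i₁, i₂⟩, rfl⟩ := finProdFinEquiv.surjective i₁₂
  obtain ⟨⟨i₃, i₄⟩, rfl⟩ := finProdFinEquiv.surjective i₃₄
  obtain ⟨⟨j₁₂, j₃₄⟩, rfl⟩ := finProdFinEquiv.surjective j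
  obtain ⟨⟨j₁, j₂⟩, rfl⟩ := finProdFinEquiv.surjective j₁₂
  obtain ⟨⟨j₃, j₄⟩, rfl⟩ := finProdFinEquiv.surjective j₃₄
  simp only [castM, finCongr_finProdFinEquiv_middle, kron_apply, mul_assoc]

end Kron

theorem powerReducing_mul_eVec (N : ℕ) (θ : Fin N) :
    powerReducing N * eVec N θ = castM rfl (one_mul 1) (kron (eVec N θ) (eVec N θ)) := by
  ext p j
  obtain ⟨⟨r, s⟩, rfl⟩ := finProdFinEquiv.surjective p
  simp only [Matrix.mul_apply, powerReducing, eVec, castM, kron, Equiv.symm_apply_apply, ite_and,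
    mul_ite, mul_one, mul_zero, Finset.sum_ite_eq', Finset.mem_univ, if_true, finCongr_refl,
    Equiv.refl_apply]
  split_ifs <;> rfl

theorem hconcat_mul_kron_eVec {N n m c : ℕ} (Ms : Fin N → Matrix (Fin n) (Fin m) ℝ) (θ : Fin N)
    (X : Matrix (Fin m) (Fin c) ℝ) :
    hconcat Ms * kron (eVec N θ) X = castM rfl (one_mul c).symm (Ms θ * X) := by
  ext r j
  obtain ⟨⟨j₀, k⟩, rfl⟩ := finProdFinEquiv.surjective j
  obtain rfl := Subsingleton.elim j₀ 0
  have hk : finCongr (one_mul c) (finProdFinEquiv (0, k)) = k := by ext; simp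
  rw [Matrix.mul_apply, ← finProdFinEquiv.sum_comp, Fintype.sum_prod_type]
  simp [hconcat, eVec, castM, kron, hk, Matrix.mul_apply]

-- The products inside `liftedB` elaborate with the `CStarMatrix` multiplication instance;
-- this restates the definition with `Matrix` multiplication so that `Matrix.mul_assoc` applies.
theorem liftedB_def {M N n m : ℕ} (L : Matrix (Fin N) (Fin (M * N)) ℝ)
    (B : Fin N → Matrix (Fin n) (Fin m) ℝ) :
    liftedB M N n m L B = kron L (1 : Matrix (Fin n) (Fin n) ℝ) *
      kron (1 : Matrix (Fin (M * N)) (Fin (M * N)) ℝ) (hconcat B) *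
      castM (by ring : M * (N * N) * m = M * N * (N * m)) rfl
        (kron (kron (1 : Matrix (Fin M) (Fin M) ℝ) (powerReducing N))
          (1 : Matrix (Fin m) (Fin m) ℝ)) := rfl

theorem liftedB_mul_kron {M N n m c : ℕ} (L : Matrix (Fin N) (Fin (M * N)) ℝ)
    (B : Fin N → Matrix (Fin n) (Fin m) ℝ) (γ : Fin M) (θ : Fin N) (X : Matrix (Fin m) (Fin c) ℝ)
    (h₁ : M * (N * m) = M * N * m) (h₂ : 1 * (1 * c) = c) :
    liftedB M N n m L B * castM h₁ h₂ (kron (eVec M γ) (kron (eVec N θ) X)) =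
      castM rfl (one_mul c)
        (kron (L * castM rfl (one_mul 1) (kron (eVec M γ) (eVec N θ))) (B θ * X)) := by
  have hassoc : castM h₁ h₂ (kron (eVec M γ) (kron (eVec N θ) X)) =
      castM rfl (by ring) (kron (kron (eVec M γ) (eVec N θ)) X) := by
    rw [← kron_assoc, castM_castM]
  have hcopy : castM (by ring) rfl (kron (kron (1 : Matrix (Fin M) (Fin M) ℝ) (powerReducing N))
        (1 : Matrix (Fin m) (Fin m) ℝ)) *
        castM rfl (by ring) (kron (kron (eVec M γ) (eVec N θ)) X) =
      castM rfl (by ring) (kron (kron (eVec M γ) (eVec N θ)) (kron (eVec N θ) X)) := by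
    rw [castM_mul_castM, kron_mul_kron, kron_mul_kron, Matrix.one_mul, Matrix.one_mul,
      powerReducing_mul_eVec, kron_castM_right, kron_castM_left, castM_castM,
      ← kron_assoc_middle _ _ _ _ (by ring) (by ring), castM_castM]
  have hselect : kron (1 : Matrix (Fin (M * N)) (Fin (M * N)) ℝ) (hconcat B) *
      castM rfl (by ring) (kron (kron (eVec M γ) (eVec N θ)) (kron (eVec N θ) X)) =
      castM rfl (by ring) (kron (kron (eVec M γ) (eVec N θ)) (B θ * X)) := by
    rw [mul_castM, kron_mul_kron, Matrix.one_mul, hconcat_mul_kron_eVec, kron_castM_right,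
      castM_castM]
  have hstate : kron L (1 : Matrix (Fin n) (Fin n) ℝ) *
      castM rfl (by ring) (kron (kron (eVec M γ) (eVec N θ)) (B θ * X)) =
      castM rfl (one_mul c)
        (kron (L * castM rfl (one_mul 1) (kron (eVec M γ) (eVec N θ))) (B θ * X)) := by
    rw [mul_castM, kron_mul_kron, Matrix.one_mul, mul_castM, kron_castM_left, castM_castM]
  rw [liftedB_def, hassoc, Matrix.mul_assoc, hcopy, Matrix.mul_assoc, hselect, hstate]

theorem liftedA_eq_liftedB (M N n : ℕ) (L : Matrix (Fin N) (Fin (M * N)) ℝ)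
    (A : Fin N → Matrix (Fin n) (Fin n) ℝ) : liftedA M N n L A = liftedB M N n n L A := rfl

theorem colM_add {k : ℕ} (x y : Fin k → ℝ) : colM (x + y) = colM x + colM y := rfl

theorem colM_mulVec {k l : ℕ} (A : Matrix (Fin k) (Fin l) ℝ) (x : Fin l → ℝ) :
    colM (A *ᵥ x) = A * colM x :=
  replicateCol_mulVec A x

/-- **Algebraic embedding of the deterministic switched system**: if `L` is the structure
matrix of `f : Fin M × Fin N → Fin N`, then for all `γ, θ, x, u`:
`δ_N^{f(γ,θ)} ⊗ (A_θ x + B_θ u) = 𝐀 (δ_M^γ ⊗ δ_N^θ ⊗ x) + 𝐁 (δ_M^γ ⊗ δ_N^θ ⊗ u)`. -/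
theorem deterministic_lifted_dynamics (M N n m : ℕ)
    (f : Fin M × Fin N → Fin N) (L : Matrix (Fin N) (Fin (M * N)) ℝ)
    (hLf : ∀ (γ : Fin M) (θ : Fin N),
      L * castM rfl (one_mul 1) (kron (eVec M γ) (eVec N θ)) = eVec N (f (γ, θ)))
    (A : Fin N → Matrix (Fin n) (Fin n) ℝ) (B : Fin N → Matrix (Fin n) (Fin m) ℝ)
    (γ : Fin M) (θ : Fin N) (x : Fin n → ℝ) (u : Fin m → ℝ) :
    castM rfl (one_mul 1) (kron (eVec N (f (γ, θ))) (colM (A θ *ᵥ x + B θ *ᵥ u))) =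
      liftedA M N n L A *
          castM (by ring) (by norm_num) (kron (eVec M γ) (kron (eVec N θ) (colM x))) +
        liftedB M N n m L B *
          castM (by ring) (by norm_num) (kron (eVec M γ) (kron (eVec N θ) (colM u))) := by
  -- `erw`: the products in the statement also carry the `CStarMatrix` instance.
  erw [liftedA_eq_liftedB, liftedB_mul_kron, liftedB_mul_kron]
  rw [hLf, ← castM_add, ← kron_add, colM_add, colM_mulVec, colM_mulVec]
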